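/- Let a: [0,∞) → ℝ be locally integrable, let y₀ ≥ 0, and assume that the negative part a⁻ := max(−a, 0) satisfies ∫₀^∞ a⁻(s) ds < +∞. Let y be the maximal solution of the Cauchy problem y' + 2a√y = 0, y(0) = y₀. Then 0 ≤ √(y(t)) ≤ √y₀ + ∫₀^∞ a⁻(s) ds for every t ≥ 0, and the limit lim_{t→∞} √(y(t)) exists and is finite. -/

import Mathlib

/-!
For `ε > 0` the function `y + ε = y₀ + ε - 2 ∫₀ᵗ a √y` is absolutely continuous with values in
`[ε, ∞)`, where `√` is Lipschitz, so `√(y + ε)` is absolutely continuous too. Its derivative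
`-a √y / √(y + ε)` is a.e. at most `a⁻`, whence `√(y t + ε) ≤ √(y s + ε) + ∫ₛᵗ a⁻`; letting
`ε → 0` gives `√(y t) ≤ √(y s) + ∫ₛᵗ a⁻` for every nonnegative solution. Hence
`√(y t) + ∫ₜ^∞ a⁻` is nonincreasing and nonnegative, so it converges, while the tail integral
tends to `0`.
-/

open MeasureTheory Set Filter

/-- `a` is locally integrable on `[0,∞)`. -/
def LocIntOn (a : ℝ → ℝ) : Prop :=
  ∀ t : ℝ, 0 ≤ t → MeasureTheory.IntegrableOn a (Set.Icc 0 t) MeasureTheory.volume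

/-- `y` is a nonnegative global solution of the Cauchy problem
`y' + 2 a √y = 0`, `y 0 = y₀`, in integral form. -/
def IsSol (a : ℝ → ℝ) (y₀ : ℝ) (y : ℝ → ℝ) : Prop :=
  ContinuousOn y (Set.Ici 0) ∧ (∀ t : ℝ, 0 ≤ t → 0 ≤ y t) ∧
    ∀ t : ℝ, 0 ≤ t → y t = y₀ - 2 * ∫ s in (0:ℝ)..t, a s * Real.sqrt (y s)

/-- Membership in the set `S(a, y₀)`. -/
def MemS (a : ℝ → ℝ) (y₀ : ℝ) (w : ℝ → ℝ) : Prop :=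
  (∀ t : ℝ, 0 ≤ t → 0 ≤ w t) ∧
    ∃ g : ℝ → ℝ,
      (∀ t : ℝ, 0 ≤ t → MeasureTheory.IntegrableOn g (Set.Icc 0 t) MeasureTheory.volume) ∧
      (∀ t : ℝ, 0 ≤ t → w t = Real.sqrt y₀ + ∫ s in (0:ℝ)..t, g s) ∧
      (∀ᵐ s ∂(MeasureTheory.volume : MeasureTheory.Measure ℝ), 0 ≤ s → 0 < w s → g s = -a s)

/-- `y` is the maximal nonnegative global solution. -/
def IsMaxSol (a : ℝ → ℝ) (y₀ : ℝ) (y : ℝ → ℝ) : Prop :=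
  IsSol a y₀ y ∧ ∀ z : ℝ → ℝ, IsSol a y₀ z → ∀ t : ℝ, 0 ≤ t → z t ≤ y t

open scoped NNReal Topology

theorem LipschitzOnWith.comp_absolutelyContinuousOnInterval {X Y : Type*}
    [PseudoMetricSpace X] [PseudoMetricSpace Y] {g : X → Y} {f : ℝ → X} {K : ℝ≥0} {s : Set X}
    {a b : ℝ} (hg : LipschitzOnWith K g s) (hf : AbsolutelyContinuousOnInterval f a b)
    (hfs : MapsTo f (uIcc a b) s) : AbsolutelyContinuousOnInterval (g ∘ f) a b := by
  unfold AbsolutelyContinuousOnInterval at hf ⊢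
  apply squeeze_zero' (.of_forall fun _ ↦ Finset.sum_nonneg fun _ _ ↦ dist_nonneg) ?_
    (by simpa using hf.const_mul (K : ℝ))
  rw [eventually_inf_principal]
  filter_upwards with E hE
  rw [Finset.mul_sum]
  gcongr with i hi
  exact hg.dist_le_mul _ (hfs (hE.1 i hi).1) _ (hfs (hE.1 i hi).2)

theorem Real.exists_lipschitzOnWith_sqrt_Ici {ε : ℝ} (hε : 0 < ε) :
    ∃ K, LipschitzOnWith K Real.sqrt (Ici ε) := by
  refine ⟨(√ε)⁻¹.toNNReal, LipschitzOnWith.of_dist_le_mul fun x hx y hy ↦ ?_⟩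
  have hx' : √ε ≤ √x := Real.sqrt_le_sqrt hx
  have hy' : √ε ≤ √y := Real.sqrt_le_sqrt hy
  have hε' : 0 < √ε := Real.sqrt_pos.2 hε
  rw [Real.coe_toNNReal _ (inv_nonneg.2 hε'.le), Real.dist_eq, Real.dist_eq,
    ← div_eq_inv_mul, le_div_iff₀ hε']
  have hxy : |x - y| = |√x - √y| * (√x + √y) := by
    rw [← abs_of_pos (by linarith : 0 < √x + √y), ← abs_mul]
    congr 1
    nlinarith [Real.sq_sqrt (hε.le.trans hx), Real.sq_sqrt (hε.le.trans hy)]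
  rw [hxy]
  gcongr
  linarith [Real.sqrt_nonneg y]

theorem AbsolutelyContinuousOnInterval.sub_le_integral_of_ae_deriv_le {g f : ℝ → ℝ} {a b : ℝ}
    (hab : a ≤ b) (hg : AbsolutelyContinuousOnInterval g a b)
    (hf : IntervalIntegrable f volume a b) (hle : ∀ᵐ x, x ∈ Icc a b → deriv g x ≤ f x) :
    g b - g a ≤ ∫ x in a..b, f x := by
  rw [← hg.integral_deriv_eq_sub]
  refine intervalIntegral.integral_mono_ae_restrict hab hg.intervalIntegrable_deriv hf ?_
  exact (ae_restrict_iff' measurableSet_Icc).2 hle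

theorem neg_mul_sqrt_div_sqrt_add_le_negPart {a y ε : ℝ} (hy : 0 ≤ y) (hε : 0 < ε) :
    -(a * √y) / √(y + ε) ≤ a⁻ := by
  have hpos : 0 < √(y + ε) := Real.sqrt_pos.2 (by linarith)
  have hle : √y ≤ √(y + ε) := Real.sqrt_le_sqrt (by linarith)
  rw [div_le_iff₀ hpos]
  nlinarith [neg_le_negPart a, negPart_nonneg a, Real.sqrt_nonneg y]

namespace IsSol

variable {a : ℝ → ℝ} {y₀ : ℝ} {y : ℝ → ℝ}

theorem intervalIntegrable_mul_sqrt (ha : LocIntOn a) (hy : IsSol a y₀ y) {t : ℝ} (ht : 0 ≤ t) :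
    IntervalIntegrable (fun s ↦ a s * √(y s)) volume 0 t := by
  rw [intervalIntegrable_iff_integrableOn_Icc_of_le ht]
  exact (ha t ht).mul_continuousOn
    (Real.continuous_sqrt.comp_continuousOn (hy.1.mono Icc_subset_Ici_self)) isCompact_Icc

theorem sqrt_add_le_sqrt_add_integral_negPart (ha : LocIntOn a) (hy : IsSol a y₀ y) {ε : ℝ}
    (hε : 0 < ε) {s t : ℝ} (hs : 0 ≤ s) (hst : s ≤ t) :
    √(y t + ε) ≤ √(y s + ε) + ∫ x in s..t, (a x)⁻ := by
  have ht := hs.trans hst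
  have hint := hy.intervalIntegrable_mul_sqrt ha ht
  set F : ℝ → ℝ := fun x ↦ ∫ r in (0 : ℝ)..x, a r * √(y r)
  set Y : ℝ → ℝ := fun x ↦ y₀ + ε - 2 * F x
  have hsub : Icc s t ⊆ uIcc 0 t := by
    rw [uIcc_of_le ht]; exact Icc_subset_Icc_left hs
  have hyY : ∀ x ∈ Icc s t, y x + ε = Y x := fun x hx ↦ by
    rw [hy.2.2 x (hs.trans hx.1)]; ring
  have hY_ac : AbsolutelyContinuousOnInterval Y s t :=
    (LipschitzWith.const (y₀ + ε)).lipschitzOnWith.absolutelyContinuousOnInterval.fun_sub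
      (((hint.absolutelyContinuousOnInterval_intervalIntegral left_mem_uIcc).mono
        (uIcc_of_le hst ▸ hsub)).const_mul 2)
  obtain ⟨K, hK⟩ := Real.exists_lipschitzOnWith_sqrt_Ici hε
  have hsqrtY_ac : AbsolutelyContinuousOnInterval (Real.sqrt ∘ Y) s t :=
    hK.comp_absolutelyContinuousOnInterval hY_ac fun x hx ↦ by
      rw [uIcc_of_le hst] at hx
      simpa [← hyY x hx] using hy.2.1 x (hs.trans hx.1)
  have hderiv : ∀ᵐ x, x ∈ Icc s t → deriv (Real.sqrt ∘ Y) x ≤ (a x)⁻ := by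
    filter_upwards [hint.ae_hasDerivAt_integral] with x hF hx
    have hyx : 0 ≤ y x := hy.2.1 x (hs.trans hx.1)
    have hYx : Y x ≠ 0 := by rw [← hyY x hx]; positivity
    have hYderiv : HasDerivAt (fun x ↦ √(Y x)) (-(2 * (a x * √(y x))) / (2 * √(Y x))) x :=
      (((hF (hsub hx) 0 left_mem_uIcc).const_mul 2).const_sub (y₀ + ε)).sqrt hYx
    rw [Function.comp_def, hYderiv.deriv, ← hyY x hx, ← mul_neg,
      mul_div_mul_left _ _ (two_ne_zero' ℝ)]
    exact neg_mul_sqrt_div_sqrt_add_le_negPart hyx hε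
  have hneg : IntervalIntegrable (fun x ↦ (a x)⁻) volume s t := by
    rw [intervalIntegrable_iff_integrableOn_Icc_of_le hst]
    exact ((ha t ht).mono_set (Icc_subset_Icc_left hs)).neg_part
  have := hsqrtY_ac.sub_le_integral_of_ae_deriv_le hst hneg hderiv
  simp only [Function.comp_apply, ← hyY s ⟨le_rfl, hst⟩, ← hyY t ⟨hst, le_rfl⟩] at this
  linarith

theorem sqrt_le_sqrt_add_integral_negPart (ha : LocIntOn a) (hy : IsSol a y₀ y) {s t : ℝ}
    (hs : 0 ≤ s) (hst : s ≤ t) : √(y t) ≤ √(y s) + ∫ x in s..t, (a x)⁻ := by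
  refine le_of_forall_pos_le_add fun δ hδ ↦ ?_
  have hys : 0 ≤ y s := hy.2.1 s hs
  have hδ' : √(y s + δ ^ 2) ≤ √(y s) + δ := by
    rw [Real.sqrt_le_left (by positivity)]
    nlinarith [Real.sq_sqrt hys, Real.sqrt_nonneg (y s)]
  calc √(y t) ≤ √(y t + δ ^ 2) := Real.sqrt_le_sqrt (by nlinarith)
    _ ≤ √(y s + δ ^ 2) + ∫ x in s..t, (a x)⁻ :=
      hy.sqrt_add_le_sqrt_add_integral_negPart ha (by positivity) hs hst
    _ ≤ _ := by linarith

end IsSol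

theorem exists_tendsto_of_le_add_intervalIntegral {u f : ℝ → ℝ} {a : ℝ}
    (hu : BddBelow (u '' Ici a)) (hf : IntegrableOn f (Ioi a))
    (hle : ∀ s t, a ≤ s → s ≤ t → u t ≤ u s + ∫ x in s..t, f x) :
    ∃ L, Tendsto u atTop (𝓝 L) := by
  obtain ⟨m, hm⟩ := hu
  have hf_abs : IntegrableOn (fun x ↦ |f x|) (Ioi a) := hf.abs
  set tail : ℝ → ℝ := fun s ↦ ∫ x in Ioi s, |f x|
  -- `u + tail` is antitone on `[a, ∞)`; precomposing with `max a` makes it antitone on `ℝ`.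
  set H : ℝ → ℝ := fun t ↦ u (max a t) + tail (max a t)
  have hanti : Antitone H := fun s t hst ↦ by
    have hs : a ≤ max a s := le_max_left a s
    have hst' : max a s ≤ max a t := max_le_max le_rfl hst
    have hsplit : tail (max a s) - tail (max a t) = ∫ x in max a s..max a t, |f x| :=
      intervalIntegral.integral_Ioi_sub_Ioi (hf_abs.mono_set (Ioi_subset_Ioi hs)) hst'
    have habs : ∫ x in max a s..max a t, f x ≤ ∫ x in max a s..max a t, |f x| :=
      intervalIntegral.integral_mono_on hst'
        ((intervalIntegrable_iff_integrableOn_Ioc_of_le hst').2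
          (hf.mono_set fun x hx ↦ hs.trans_lt hx.1))
        ((intervalIntegrable_iff_integrableOn_Ioc_of_le hst').2
          (hf_abs.mono_set fun x hx ↦ hs.trans_lt hx.1))
        fun x _ ↦ le_abs_self (f x)
    linarith [hle _ _ hs hst']
  have hbdd : BddBelow (range H) := ⟨m, by
    rintro _ ⟨t, rfl⟩
    exact le_add_of_le_of_nonneg (hm ⟨max a t, le_max_left a t, rfl⟩)
      (integral_nonneg fun x ↦ abs_nonneg (f x))⟩
  have hu_eq : H - tail =ᶠ[atTop] u := by
    filter_upwards [eventually_ge_atTop a] with t ht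
    simp [H, max_eq_right ht]
  have htail : Tendsto tail atTop (𝓝 0) := tendsto_integral_Ioi_zero tendsto_id
  simpa using ⟨_, ((tendsto_atTop_ciInf hanti hbdd).sub htail).congr' hu_eq⟩

theorem stmt11_general (a : ℝ → ℝ) (y₀ : ℝ) (ha : LocIntOn a)
    (haneg : MeasureTheory.IntegrableOn (fun s => max (-a s) 0) (Set.Ici 0)
      MeasureTheory.volume)
    (y : ℝ → ℝ) (hy : IsMaxSol a y₀ y) :
    (∀ t : ℝ, 0 ≤ t → 0 ≤ Real.sqrt (y t) ∧
      Real.sqrt (y t) ≤ Real.sqrt y₀ + ∫ s in Set.Ici (0:ℝ), max (-a s) 0) ∧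
    ∃ L : ℝ, Filter.Tendsto (fun t => Real.sqrt (y t)) Filter.atTop (nhds L) := by
  have hsol : IsSol a y₀ y := hy.1
  have hy0 : y 0 = y₀ := by simpa using hsol.2.2 0 le_rfl
  have haneg' : IntegrableOn (fun x ↦ (a x)⁻) (Ioi 0) := haneg.mono_set Ioi_subset_Ici_self
  refine ⟨fun t ht ↦ ⟨Real.sqrt_nonneg _, ?_⟩, ?_⟩
  · have htail : 0 ≤ ∫ x in Ioi t, (a x)⁻ := integral_nonneg fun x ↦ negPart_nonneg (a x)
    calc √(y t) ≤ √(y 0) + ∫ x in 0..t, (a x)⁻ :=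
          hsol.sqrt_le_sqrt_add_integral_negPart ha le_rfl ht
      _ = √y₀ + ((∫ x in Ioi 0, (a x)⁻) - ∫ x in Ioi t, (a x)⁻) := by
        rw [hy0, intervalIntegral.integral_Ioi_sub_Ioi haneg' ht]
      _ ≤ √y₀ + ∫ x in Ici 0, (a x)⁻ := by
        rw [integral_Ici_eq_integral_Ioi]
        linarith
  · refine exists_tendsto_of_le_add_intervalIntegral ⟨0, ?_⟩ haneg'
      fun s t hs hst ↦ hsol.sqrt_le_sqrt_add_integral_negPart ha hs hst
    rintro _ ⟨t, -, rfl⟩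
    exact Real.sqrt_nonneg _

theorem stmt11 (a : ℝ → ℝ) (y₀ : ℝ) (ha : LocIntOn a) (hy₀ : 0 ≤ y₀)
    (haneg : MeasureTheory.IntegrableOn (fun s => max (-a s) 0) (Set.Ici 0)
      MeasureTheory.volume)
    (y : ℝ → ℝ) (hy : IsMaxSol a y₀ y) :
    (∀ t : ℝ, 0 ≤ t → 0 ≤ Real.sqrt (y t) ∧
      Real.sqrt (y t) ≤ Real.sqrt y₀ + ∫ s in Set.Ici (0:ℝ), max (-a s) 0) ∧
    ∃ L : ℝ, Filter.Tendsto (fun t => Real.sqrt (y t)) Filter.atTop (nhds L) :=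
  stmt11_general a y₀ ha haneg y hy
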